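/- Let G₁ = (g₁, [,]₁, ϖ¹, φ¹) and G₂ = (g₂, [,]₂, ϖ², φ²) be Lie quasi-bialgebras with doubles d¹, d², and let ψ : g₁ → g₂ be a Lie quasi-bialgebra morphism (a Lie algebra morphism with ψ ϖ¹_x ψ* = ϖ²_{ψx} and ψ^{(3)} φ¹ = φ²). Then for all n ∈ ℕ, u ∈ g₁ and ξ ∈ g₂*: ψ ∘ p_{g₁} ∘ (ad¹_{ψ*ξ})ⁿ (u) = p_{g₂} ∘ (ad²_ξ)ⁿ (ψ u), where ad^j denotes the adjoint action of the double d^j = g_j ⊕ g_j* on itself and p_{g_j} is the projection onto g_j along g_j*. -/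

import Mathlib

/-! Say `(x, α) ∈ d¹` and `(y, η) ∈ d²` are related when `ψ x = y` and `α = ψ* η`. Because `ψ` is a
Lie morphism intertwining `ϖ¹, ϖ²` and `φ¹, φ²`, bracketing with `(0, ψ* ξ)` in `d¹` and with
`(0, ξ)` in `d²` preserves this relation; iterating from the related pair `(u, 0)`, `(ψ u, 0)` and
taking first components gives the identity. -/

section

/-- The bracket of the canonical double `d = g ⊕ g*` of a Lie quasi-bialgebra
`(g, [,], ϖ, φ)`, where `c ξ η = ⟨ξ⊗η⊗1, φ⟩` is the contraction of the associator:
`[x,y]_d = [x,y]`, `[x,ξ]_d = ϖ_x ξ − ad*_x ξ`,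
`[ξ,η]_d = ⟨ξ⊗η⊗1, φ⟩ + ⟨η, ϖ_• ξ⟩`. -/
def brD {K L : Type*} [Field K] [LieRing L] [LieAlgebra K L]
    (ϖ : L →ₗ[K] Module.Dual K L →ₗ[K] L)
    (c : Module.Dual K L →ₗ[K] Module.Dual K L →ₗ[K] L) :
    L × Module.Dual K L → L × Module.Dual K L → L × Module.Dual K L :=
  fun X Y =>
    (⁅X.1, Y.1⁆ + ϖ X.1 Y.2 - ϖ Y.1 X.2 + c X.2 Y.2,
      - Y.2 ∘ₗ LieAlgebra.ad K L X.1 + X.2 ∘ₗ LieAlgebra.ad K L Y.1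
        + Y.2 ∘ₗ ϖ.flip X.2)

variable {K L M : Type*} [Field K] [LieRing L] [LieAlgebra K L]
  [LieRing M] [LieAlgebra K M]

def DoubleRelated (ψ : L →ₗ⁅K⁆ M) (X : L × Module.Dual K L) (Y : M × Module.Dual K M) :
    Prop :=
  ψ X.1 = Y.1 ∧ X.2 = ψ.toLinearMap.dualMap Y.2

structure IsQuasiBialgebraHom (ϖ₁ : L →ₗ[K] Module.Dual K L →ₗ[K] L)
    (c₁ : Module.Dual K L →ₗ[K] Module.Dual K L →ₗ[K] L)
    (ϖ₂ : M →ₗ[K] Module.Dual K M →ₗ[K] M)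
    (c₂ : Module.Dual K M →ₗ[K] Module.Dual K M →ₗ[K] M) (ψ : L →ₗ⁅K⁆ M) : Prop where
  map_ϖ : ∀ (x : L) (ξ : Module.Dual K M), ψ (ϖ₁ x (ψ.toLinearMap.dualMap ξ)) = ϖ₂ (ψ x) ξ
  map_c : ∀ ξ η : Module.Dual K M,
    ψ (c₁ (ψ.toLinearMap.dualMap ξ) (ψ.toLinearMap.dualMap η)) = c₂ ξ η

namespace DoubleRelated

variable {ϖ₁ : L →ₗ[K] Module.Dual K L →ₗ[K] L}
  {c₁ : Module.Dual K L →ₗ[K] Module.Dual K L →ₗ[K] L}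
  {ϖ₂ : M →ₗ[K] Module.Dual K M →ₗ[K] M}
  {c₂ : Module.Dual K M →ₗ[K] Module.Dual K M →ₗ[K] M}
  {ψ : L →ₗ⁅K⁆ M} {X : L × Module.Dual K L} {Y : M × Module.Dual K M}

theorem brD_dualMap (hψ : IsQuasiBialgebraHom ϖ₁ c₁ ϖ₂ c₂ ψ) (ξ : Module.Dual K M)
    (h : DoubleRelated ψ X Y) :
    DoubleRelated ψ (brD ϖ₁ c₁ (0, ψ.toLinearMap.dualMap ξ) X) (brD ϖ₂ c₂ (0, ξ) Y) := by
  obtain ⟨hfst, hsnd⟩ := h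
  constructor
  · simp [brD, hsnd, ← hfst, hψ.map_ϖ, hψ.map_c]
  · ext v
    simp [brD, hsnd, ← hfst, ← hψ.map_ϖ]

theorem iterate_brD_dualMap (hψ : IsQuasiBialgebraHom ϖ₁ c₁ ϖ₂ c₂ ψ) (ξ : Module.Dual K M)
    (h : DoubleRelated ψ X Y) (n : ℕ) :
    DoubleRelated ψ ((fun Z => brD ϖ₁ c₁ (0, ψ.toLinearMap.dualMap ξ) Z)^[n] X)
      ((fun Z => brD ϖ₂ c₂ (0, ξ) Z)^[n] Y) := by
  induction n with
  | zero => exact h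
  | succ n ih =>
    rw [Function.iterate_succ_apply', Function.iterate_succ_apply']
    exact ih.brD_dualMap hψ ξ

end DoubleRelated

theorem stmt_11_general
    (ϖ₁ : L →ₗ[K] Module.Dual K L →ₗ[K] L)
    (c₁ : Module.Dual K L →ₗ[K] Module.Dual K L →ₗ[K] L)
    (ϖ₂ : M →ₗ[K] Module.Dual K M →ₗ[K] M)
    (c₂ : Module.Dual K M →ₗ[K] Module.Dual K M →ₗ[K] M)
    -- `ψ` is a Lie quasi-bialgebra morphism
    (ψ : L →ₗ⁅K⁆ M)
    (hϖψ : ∀ (x : L) (ξ : Module.Dual K M),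
      ψ (ϖ₁ x (ψ.toLinearMap.dualMap ξ)) = ϖ₂ (ψ x) ξ)
    (hcψ : ∀ ξ η : Module.Dual K M,
      ψ (c₁ (ψ.toLinearMap.dualMap ξ) (ψ.toLinearMap.dualMap η)) = c₂ ξ η) :
    ∀ (n : ℕ) (u : L) (ξ : Module.Dual K M),
      ψ (((fun Y => brD ϖ₁ c₁ (0, ψ.toLinearMap.dualMap ξ) Y)^[n] (u, 0)).1)
        = ((fun Y => brD ϖ₂ c₂ (0, ξ) Y)^[n] (ψ u, 0)).1 := by
  intro n u ξ
  have h₀ : DoubleRelated ψ (u, 0) (ψ u, 0) := ⟨rfl, (map_zero _).symm⟩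
  exact (h₀.iterate_brD_dualMap ⟨hϖψ, hcψ⟩ ξ n).1

/-- If `ψ : G₁ → G₂` is a morphism of Lie quasi-bialgebras, then
`ψ ∘ p_{g₁} ∘ (ad¹_{ψ*ξ})ⁿ ∘ i_{g₁} = p_{g₂} ∘ (ad²_ξ)ⁿ ∘ i_{g₂} ∘ ψ`. -/
theorem stmt_11
    (ϖ₁ : L →ₗ[K] Module.Dual K L →ₗ[K] L)
    (c₁ : Module.Dual K L →ₗ[K] Module.Dual K L →ₗ[K] L)
    (ϖ₂ : M →ₗ[K] Module.Dual K M →ₗ[K] M)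
    (c₂ : Module.Dual K M →ₗ[K] Module.Dual K M →ₗ[K] M)
    -- `G₁` and `G₂` are Lie quasi-bialgebras: the double brackets are Lie brackets
    (h1anti : ∀ X Y, brD ϖ₁ c₁ X Y = - brD ϖ₁ c₁ Y X)
    (h1jac : ∀ X Y Z, brD ϖ₁ c₁ X (brD ϖ₁ c₁ Y Z)
      = brD ϖ₁ c₁ (brD ϖ₁ c₁ X Y) Z + brD ϖ₁ c₁ Y (brD ϖ₁ c₁ X Z))
    (h2anti : ∀ X Y, brD ϖ₂ c₂ X Y = - brD ϖ₂ c₂ Y X)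
    (h2jac : ∀ X Y Z, brD ϖ₂ c₂ X (brD ϖ₂ c₂ Y Z)
      = brD ϖ₂ c₂ (brD ϖ₂ c₂ X Y) Z + brD ϖ₂ c₂ Y (brD ϖ₂ c₂ X Z))
    -- `ψ` is a Lie quasi-bialgebra morphism
    (ψ : L →ₗ⁅K⁆ M)
    (hϖψ : ∀ (x : L) (ξ : Module.Dual K M),
      ψ (ϖ₁ x (ψ.toLinearMap.dualMap ξ)) = ϖ₂ (ψ x) ξ)
    (hcψ : ∀ ξ η : Module.Dual K M,
      ψ (c₁ (ψ.toLinearMap.dualMap ξ) (ψ.toLinearMap.dualMap η)) = c₂ ξ η) :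
    ∀ (n : ℕ) (u : L) (ξ : Module.Dual K M),
      ψ (((fun Y => brD ϖ₁ c₁ (0, ψ.toLinearMap.dualMap ξ) Y)^[n] (u, 0)).1)
        = ((fun Y => brD ϖ₂ c₂ (0, ξ) Y)^[n] (ψ u, 0)).1 :=
  stmt_11_general ϖ₁ c₁ ϖ₂ c₂ ψ hϖψ hcψ

end
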